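/- Let W(k) be row-stochastic matrices whose positive entries are bounded below by α > 0, and suppose for every t ≥ 0 the product W(t+h)···W(t+1) is scrambling. Then the backward product W(k)···W(1) converges as k → ∞ to a rank-one matrix 𝟏ξᵀ, and moreover τ(W(mh)···W(1)) ≤ (1-α^h)^m, i.e., convergence is exponential with rate at least (1-α^h)^{1/h}. -/

import Mathlib

open MeasureTheory Filter

def IsStochastic {n : ℕ} (A : Matrix (Fin n) (Fin n) ℝ) : Prop :=
  (∀ i j, 0 ≤ A i j) ∧ ∀ i, ∑ j, A i j = 1

noncomputable def tau {n : ℕ} (A : Matrix (Fin n) (Fin n) ℝ) : ℝ :=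
  1 - ⨅ p : Fin n × Fin n, ∑ s, min (A p.1 s) (A p.2 s)

def Scrambling {n : ℕ} (A : Matrix (Fin n) (Fin n) ℝ) : Prop :=
  ∀ i j, ∃ s, 0 < A i s ∧ 0 < A j s

noncomputable def spread {n : ℕ} (x : Fin n → ℝ) : ℝ := (⨆ i, x i) - ⨅ i, x i

def backProd {n : ℕ} (W : ℕ → Matrix (Fin n) (Fin n) ℝ) (k : ℕ) : ℕ → Matrix (Fin n) (Fin n) ℝ
  | 0 => 1
  | h + 1 => W (k + h + 1) * backProd W k h

/-!
Dobrushin's coefficient `τ` controls the spread (max − min) of vectors,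
`spread (A x) ≤ τ(A) · spread x`, and testing with indicator vectors shows that `τ(A)` is the best
such constant, so `τ` is submultiplicative. A block `W(t+h)⋯W(t+1)` is scrambling with positive
entries at least `α^h`, so its `τ` is at most `1 − α^h`, and submultiplicativity gives the
geometric bound. For convergence, the column minima of the backward products increase, since a
stochastic matrix averages columns, while the spread of each column is at most `τ → 0`; so every
column is squeezed onto a constant limit.
-/

open Finset Matrix Topology

section

variable {n : ℕ}

theorem IsStochastic.one : IsStochastic (1 : Matrix (Fin n) (Fin n) ℝ) :=
  ⟨fun i j => by by_cases h : i = j <;> simp [one_apply, h], fun i => by simp [one_apply]⟩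

theorem IsStochastic.mul {A B : Matrix (Fin n) (Fin n) ℝ} (hA : IsStochastic A)
    (hB : IsStochastic B) : IsStochastic (A * B) := by
  refine ⟨fun i j => ?_, fun i => ?_⟩
  · rw [mul_apply]
    exact sum_nonneg fun s _ => mul_nonneg (hA.1 i s) (hB.1 s j)
  · simp only [mul_apply]
    rw [sum_comm]
    simp only [← mul_sum, hB.2, mul_one, hA.2]

theorem IsStochastic.apply_le_one {A : Matrix (Fin n) (Fin n) ℝ} (hA : IsStochastic A)
    (i j : Fin n) : A i j ≤ 1 :=
  (single_le_sum (fun s _ => hA.1 i s) (mem_univ j)).trans_eq (hA.2 i)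

theorem IsStochastic.iInf_le_mul_apply {A : Matrix (Fin n) (Fin n) ℝ} (hA : IsStochastic A)
    (B : Matrix (Fin n) (Fin n) ℝ) (i j : Fin n) : ⨅ s, B s j ≤ (A * B) i j :=
  calc ⨅ s, B s j = ∑ s, A i s * ⨅ s', B s' j := by rw [← sum_mul, hA.2 i, one_mul]
    _ ≤ ∑ s, A i s * B s j := sum_le_sum fun s _ =>
        mul_le_mul_of_nonneg_left (ciInf_le (Finite.bddBelow_range _) s) (hA.1 i s)

theorem sub_le_spread (x : Fin n → ℝ) (i j : Fin n) : x i - x j ≤ spread x :=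
  sub_le_sub (le_ciSup (Finite.bddAbove_range _) i) (ciInf_le (Finite.bddBelow_range _) j)

theorem spread_nonneg [NeZero n] (x : Fin n → ℝ) : 0 ≤ spread x :=
  (sub_self (x 0)).symm.le.trans (sub_le_spread x 0 0)

theorem spread_le_of_forall_sub_le [NeZero n] {x : Fin n → ℝ} {c : ℝ}
    (h : ∀ i j, x i - x j ≤ c) : spread x ≤ c := by
  rw [spread, sub_le_iff_le_add]
  refine ciSup_le fun i => ?_
  rw [← sub_le_iff_le_add']
  exact le_ciInf fun j => sub_le_comm.1 (h i j)

theorem one_sub_sum_min_le_tau (A : Matrix (Fin n) (Fin n) ℝ) (i j : Fin n) :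
    1 - ∑ s, min (A i s) (A j s) ≤ tau A :=
  sub_le_sub_left (ciInf_le (Finite.bddBelow_range
    (fun p : Fin n × Fin n => ∑ s, min (A p.1 s) (A p.2 s))) (i, j)) 1

theorem tau_le_of_forall [NeZero n] {A : Matrix (Fin n) (Fin n) ℝ} {c : ℝ}
    (h : ∀ i j, 1 - c ≤ ∑ s, min (A i s) (A j s)) : tau A ≤ c := by
  have := le_ciInf fun p : Fin n × Fin n => h p.1 p.2
  rw [tau]
  linarith

theorem tau_nonneg [NeZero n] {A : Matrix (Fin n) (Fin n) ℝ} (hA : IsStochastic A) :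
    0 ≤ tau A := by
  simpa [hA.2 0] using one_sub_sum_min_le_tau A 0 0

theorem tau_le_one [NeZero n] {A : Matrix (Fin n) (Fin n) ℝ} (hA : IsStochastic A) :
    tau A ≤ 1 :=
  tau_le_of_forall fun i j => by
    simpa using sum_nonneg fun s _ => le_min (hA.1 i s) (hA.1 j s)

theorem apply_sub_apply_le_tau {A : Matrix (Fin n) (Fin n) ℝ} (hA : IsStochastic A)
    (i i' j : Fin n) : A i j - A i' j ≤ tau A :=
  calc A i j - A i' j ≤ A i j - min (A i j) (A i' j) := sub_le_sub_left (min_le_right _ _) _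
    _ ≤ ∑ s, (A i s - min (A i s) (A i' s)) :=
        single_le_sum (f := fun s => A i s - min (A i s) (A i' s))
          (fun s _ => sub_nonneg.2 (min_le_left _ _)) (mem_univ j)
    _ = 1 - ∑ s, min (A i s) (A i' s) := by rw [sum_sub_distrib, hA.2 i]
    _ ≤ tau A := one_sub_sum_min_le_tau A i i'

theorem tau_le_one_sub_of_scrambling [NeZero n] {A : Matrix (Fin n) (Fin n) ℝ}
    (hA : IsStochastic A) (hscr : Scrambling A) {γ : ℝ}
    (hγ : ∀ i j, 0 < A i j → γ ≤ A i j) :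
    tau A ≤ 1 - γ :=
  tau_le_of_forall fun i j => by
    obtain ⟨s, hi, hj⟩ := hscr i j
    calc 1 - (1 - γ) = γ := sub_sub_cancel 1 γ
      _ ≤ min (A i s) (A j s) := le_min (hγ i s hi) (hγ j s hj)
      _ ≤ ∑ s', min (A i s') (A j s') :=
          single_le_sum (fun s' _ => le_min (hA.1 i s') (hA.1 j s')) (mem_univ s)

/-- Removing the common mass `min (A i s) (A j s)` leaves two nonnegative weight vectors of total
mass `1 - ∑ s, min (A i s) (A j s)`, one averaged against the maximum of `x`, one against its
minimum. -/
theorem mulVec_sub_mulVec_le {A : Matrix (Fin n) (Fin n) ℝ} (hA : IsStochastic A)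
    (x : Fin n → ℝ) (i j : Fin n) :
    (A *ᵥ x) i - (A *ᵥ x) j ≤ (1 - ∑ s, min (A i s) (A j s)) * spread x := by
  set g : Fin n → ℝ := fun s => min (A i s) (A j s)
  have hmass : ∀ k, ∑ s, (A k s - g s) = 1 - ∑ s, g s := fun k => by
    rw [sum_sub_distrib, hA.2 k]
  have hdiff : (A *ᵥ x) i - (A *ᵥ x) j
      = ∑ s, (A i s - g s) * x s - ∑ s, (A j s - g s) * x s := by
    simp only [mulVec, dotProduct, sub_mul, sum_sub_distrib]
    ring
  have hup : ∑ s, (A i s - g s) * x s ≤ (1 - ∑ s, g s) * ⨆ s, x s := by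
    rw [← hmass i, sum_mul]
    exact sum_le_sum fun s _ => mul_le_mul_of_nonneg_left
      (le_ciSup (Finite.bddAbove_range _) s) (sub_nonneg.2 (min_le_left _ _))
  have hlow : (1 - ∑ s, g s) * ⨅ s, x s ≤ ∑ s, (A j s - g s) * x s := by
    rw [← hmass j, sum_mul]
    exact sum_le_sum fun s _ => mul_le_mul_of_nonneg_left
      (ciInf_le (Finite.bddBelow_range _) s) (sub_nonneg.2 (min_le_right _ _))
  rw [hdiff, spread, mul_sub]
  linarith

theorem spread_mulVec_le [NeZero n] {A : Matrix (Fin n) (Fin n) ℝ} (hA : IsStochastic A)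
    (x : Fin n → ℝ) : spread (A *ᵥ x) ≤ tau A * spread x :=
  spread_le_of_forall_sub_le fun i j => (mulVec_sub_mulVec_le hA x i j).trans
    (mul_le_mul_of_nonneg_right (one_sub_sum_min_le_tau A i j) (spread_nonneg x))

theorem tau_le_of_spread_mulVec_le [NeZero n] {A : Matrix (Fin n) (Fin n) ℝ}
    (hA : IsStochastic A) {C : ℝ} (hC : 0 ≤ C) (h : ∀ x, spread (A *ᵥ x) ≤ C * spread x) :
    tau A ≤ C := by
  refine tau_le_of_forall fun i j => ?_
  let x : Fin n → ℝ := fun s => if A j s < A i s then 1 else 0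
  have hx : (A *ᵥ x) i - (A *ᵥ x) j = 1 - ∑ s, min (A i s) (A j s) := by
    simp only [mulVec, dotProduct, ← sum_sub_distrib, ← hA.2 i]
    refine sum_congr rfl fun s _ => ?_
    by_cases hs : A j s < A i s
    · simp [x, hs, min_eq_right hs.le]
    · simp [x, hs, min_eq_left (not_lt.1 hs)]
  have hspread : spread x ≤ 1 :=
    spread_le_of_forall_sub_le fun s t => by simp only [x]; split_ifs <;> norm_num
  have := calc 1 - ∑ s, min (A i s) (A j s) = (A *ᵥ x) i - (A *ᵥ x) j := hx.symm
    _ ≤ spread (A *ᵥ x) := sub_le_spread _ i j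
    _ ≤ C * spread x := h x
    _ ≤ C := mul_le_of_le_one_right hC hspread
  linarith

theorem tau_mul_le [NeZero n] {A B : Matrix (Fin n) (Fin n) ℝ} (hA : IsStochastic A)
    (hB : IsStochastic B) : tau (A * B) ≤ tau A * tau B := by
  refine tau_le_of_spread_mulVec_le (hA.mul hB) (mul_nonneg (tau_nonneg hA) (tau_nonneg hB))
    fun x => ?_
  rw [← mulVec_mulVec, mul_assoc]
  exact (spread_mulVec_le hA _).trans
    (mul_le_mul_of_nonneg_left (spread_mulVec_le hB x) (tau_nonneg hA))

end

section

variable {n : ℕ} (W : ℕ → Matrix (Fin n) (Fin n) ℝ)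

theorem backProd_add (t a b : ℕ) :
    backProd W t (a + b) = backProd W (t + a) b * backProd W t a := by
  induction b with
  | zero => simp [backProd]
  | succ b ih =>
    show W (t + (a + b) + 1) * backProd W t (a + b) = W (t + a + b + 1) * _ * _
    rw [ih, ← Matrix.mul_assoc, add_assoc t a b]

variable {W}

theorem isStochastic_backProd (hW : ∀ k, IsStochastic (W k)) (t : ℕ) :
    ∀ l, IsStochastic (backProd W t l)
  | 0 => IsStochastic.one
  | l + 1 => (hW _).mul (isStochastic_backProd hW t l)

theorem le_backProd_apply_of_pos (hW : ∀ k, IsStochastic (W k)) {α : ℝ} (hα : 0 ≤ α)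
    (hbdd : ∀ k i j, 0 < W k i j → α ≤ W k i j) (t l : ℕ) (i j : Fin n)
    (hpos : 0 < backProd W t l i j) : α ^ l ≤ backProd W t l i j := by
  induction l generalizing i with
  | zero =>
    by_cases hij : i = j
    · simp [backProd, one_apply, hij]
    · simp [backProd, one_apply, hij] at hpos
  | succ l ih =>
    have hP := isStochastic_backProd hW t l
    change 0 < ∑ s, W (t + l + 1) i s * backProd W t l s j at hpos
    change α ^ (l + 1) ≤ ∑ s, W (t + l + 1) i s * backProd W t l s j
    obtain ⟨s, -, hs⟩ := exists_lt_of_sum_lt (f := fun _ => (0 : ℝ)) (by simpa using hpos)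
    have hB : 0 < backProd W t l s j := pos_of_mul_pos_right hs ((hW _).1 i s)
    have hW' : 0 < W (t + l + 1) i s := pos_of_mul_pos_left hs (hP.1 s j)
    calc α ^ (l + 1) = α * α ^ l := pow_succ' α l
      _ ≤ W (t + l + 1) i s * backProd W t l s j :=
          mul_le_mul (hbdd _ _ _ hW') (ih s hB) (pow_nonneg hα l) ((hW _).1 i s)
      _ ≤ ∑ s', W (t + l + 1) i s' * backProd W t l s' j :=
          single_le_sum (fun s' _ => mul_nonneg ((hW _).1 i s') (hP.1 s' j)) (mem_univ s)

variable [NeZero n] (hW : ∀ k, IsStochastic (W k)) {h : ℕ} {r : ℝ}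
  (hblock : ∀ t, tau (backProd W t h) ≤ r)
include hW hblock

theorem tau_backProd_le_pow (t m : ℕ) : tau (backProd W t (m * h)) ≤ r ^ m := by
  induction m with
  | zero => simpa [backProd] using tau_le_one (IsStochastic.one (n := n))
  | succ m ih =>
    rw [Nat.succ_mul, backProd_add, pow_succ']
    exact (tau_mul_le (isStochastic_backProd hW _ _) (isStochastic_backProd hW _ _)).trans <|
      mul_le_mul (hblock _) ih (tau_nonneg (isStochastic_backProd hW _ _))
        ((tau_nonneg (isStochastic_backProd hW _ _)).trans (hblock 0))

theorem tau_backProd_le_pow_div (t k : ℕ) : tau (backProd W t k) ≤ r ^ (k / h) := by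
  conv_lhs => rw [← Nat.div_add_mod' k h, backProd_add]
  calc _ ≤ tau (backProd W (t + k / h * h) (k % h)) * tau (backProd W t (k / h * h)) :=
        tau_mul_le (isStochastic_backProd hW _ _) (isStochastic_backProd hW _ _)
    _ ≤ 1 * r ^ (k / h) := mul_le_mul (tau_le_one (isStochastic_backProd hW _ _))
        (tau_backProd_le_pow hW hblock t _) (tau_nonneg (isStochastic_backProd hW _ _)) zero_le_one
    _ = r ^ (k / h) := one_mul _

theorem tendsto_tau_backProd (hh : h ≠ 0) (hr : r < 1) (t : ℕ) :
    Tendsto (fun k => tau (backProd W t k)) atTop (𝓝 0) := by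
  have hr0 : 0 ≤ r := (tau_nonneg (isStochastic_backProd hW 0 h)).trans (hblock 0)
  exact squeeze_zero (fun k => tau_nonneg (isStochastic_backProd hW t k))
    (tau_backProd_le_pow_div hW hblock t)
    ((tendsto_pow_atTop_nhds_zero_of_lt_one hr0 hr).comp (Nat.tendsto_div_const_atTop hh))

end

theorem exists_tendsto_backProd_of_tendsto_tau {n : ℕ} [NeZero n]
    {W : ℕ → Matrix (Fin n) (Fin n) ℝ} (hW : ∀ k, IsStochastic (W k)) {t : ℕ}
    (hτ : Tendsto (fun k => tau (backProd W t k)) atTop (𝓝 0)) :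
    ∃ ξ : Fin n → ℝ,
      Tendsto (fun k => backProd W t k) atTop (𝓝 (Matrix.of fun _ j => ξ j)) := by
  let colMin : ℕ → Fin n → ℝ := fun k j => ⨅ i, backProd W t k i j
  have hmono : ∀ j, Monotone (colMin · j) := fun j => monotone_nat_of_le_succ fun k =>
    le_ciInf fun i => (hW _).iInf_le_mul_apply _ i j
  have hbdd : ∀ j, BddAbove (Set.range (colMin · j)) := fun j => ⟨1, by
    rintro _ ⟨k, rfl⟩
    exact (ciInf_le (Finite.bddBelow_range _) 0).trans
      ((isStochastic_backProd hW t k).apply_le_one 0 j)⟩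
  refine ⟨fun j => ⨆ k, colMin k j, tendsto_pi_nhds.2 fun i => tendsto_pi_nhds.2 fun j => ?_⟩
  have hlim := tendsto_atTop_ciSup (hmono j) (hbdd j)
  refine tendsto_of_tendsto_of_tendsto_of_le_of_le hlim (by simpa using hlim.add hτ)
    (fun k => ciInf_le (Finite.bddBelow_range _) i) fun k => ?_
  change _ ≤ colMin k j + tau (backProd W t k)
  rw [← sub_le_iff_le_add]
  exact le_ciInf fun i' =>
    sub_le_comm.1 (apply_sub_apply_le_tau (isStochastic_backProd hW t k) i i' j)

theorem backward_product_exponential_convergence_general {n : ℕ} (hn : 0 < n)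
    (W : ℕ → Matrix (Fin n) (Fin n) ℝ) (hstoch : ∀ k, IsStochastic (W k))
    (α : ℝ) (hα0 : 0 < α)
    (hbdd : ∀ k i j, 0 < W k i j → α ≤ W k i j)
    (h : ℕ) (hh : 1 ≤ h) (hscr : ∀ t : ℕ, Scrambling (backProd W t h)) :
    (∃ ξ : Fin n → ℝ,
      Tendsto (fun k => backProd W 0 k) atTop (nhds (Matrix.of fun _ j => ξ j))) ∧
    ∀ m : ℕ, tau (backProd W 0 (m * h)) ≤ (1 - α ^ h) ^ m := by
  have : NeZero n := ⟨hn.ne'⟩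
  have hblock : ∀ t, tau (backProd W t h) ≤ 1 - α ^ h := fun t =>
    tau_le_one_sub_of_scrambling (isStochastic_backProd hstoch t h) (hscr t)
      (le_backProd_apply_of_pos hstoch hα0.le hbdd t h)
  have hrate : 1 - α ^ h < 1 := sub_lt_self 1 (pow_pos hα0 h)
  exact ⟨exists_tendsto_backProd_of_tendsto_tau hstoch
      (tendsto_tau_backProd hstoch hblock (by omega) hrate 0),
    tau_backProd_le_pow hstoch hblock 0⟩

theorem backward_product_exponential_convergence {n : ℕ} (hn : 0 < n)
    (W : ℕ → Matrix (Fin n) (Fin n) ℝ) (hstoch : ∀ k, IsStochastic (W k))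
    (α : ℝ) (hα0 : 0 < α) (hα1 : α ≤ 1)
    (hbdd : ∀ k i j, 0 < W k i j → α ≤ W k i j)
    (h : ℕ) (hh : 1 ≤ h) (hscr : ∀ t : ℕ, Scrambling (backProd W t h)) :
    (∃ ξ : Fin n → ℝ,
      Tendsto (fun k => backProd W 0 k) atTop (nhds (Matrix.of fun _ j => ξ j))) ∧
    ∀ m : ℕ, tau (backProd W 0 (m * h)) ≤ (1 - α ^ h) ^ m :=
  backward_product_exponential_convergence_general hn W hstoch α hα0 hbdd h hh hscr
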